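/- Let C' ∈ (0, 1), set R_max = log₂( 1/(1 − C') ), and let 0 < R < R_max. Then for every snr > 0 and every h = (h_0, …, h_ν) ∈ ℂ^{ν+1} satisfying |D(h)| ≥ 2π·C', if 1 + γ_mmse(snr, h) < 2^R, then snr·‖h‖² < (2^R − 1) / (1 − 2^{R − R_max}). -/

import Mathlib

/-! With `x = snr‖h‖²`, the MMSE integrand `1/(snr|H|² + 1)` is at most `1/(x + 1)` on `D(h)`
and at most `1` elsewhere, so its mean over `[-π, π]` is at most `1 - C'·x/(x + 1)`. Outage
says this mean exceeds `2^{-R}`; clearing denominators gives `x(1 - 2^R(1 - C')) < 2^R - 1`,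
and `2^R(1 - C') = 2^{R - R_max} < 1`. -/

open MeasureTheory Finset

noncomputable def Hf (ν : ℕ) (h : ℕ → ℂ) (u : ℝ) : ℂ :=
  ∑ m ∈ Finset.range (ν + 1), h m * Complex.exp (-(Complex.I * m * u))

noncomputable def norm2 (ν : ℕ) (h : ℕ → ℂ) : ℝ :=
  ∑ m ∈ Finset.range (ν + 1), ‖h m‖ ^ 2

def Dset (ν : ℕ) (h : ℕ → ℂ) : Set ℝ :=
  {u | u ∈ Set.Icc (-Real.pi) Real.pi ∧ norm2 ν h < ‖Hf ν h u‖ ^ 2}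

noncomputable def γmmse (ν : ℕ) (snr : ℝ) (h : ℕ → ℂ) : ℝ :=
  ((2 * Real.pi)⁻¹ * ∫ u in (-Real.pi)..Real.pi,
      (snr * ‖Hf ν h u‖ ^ 2 + 1)⁻¹)⁻¹ - 1

open Real Set

section IntegralBound

variable {α : Type*} [MeasurableSpace α] {μ : Measure α} {f : α → ℝ} {s t : Set α} {c : ℝ}

theorem setIntegral_le_measureReal_sub_mul (hs : MeasurableSet s) (hμs : μ s ≠ ⊤)
    (ht : MeasurableSet t) (hf : IntegrableOn f s μ) (hf_le_one : ∀ u ∈ s, f u ≤ 1)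
    (hf_le : ∀ u ∈ s ∩ t, f u ≤ c) :
    ∫ u in s, f u ∂μ ≤ μ.real s - (1 - c) * μ.real (s ∩ t) := by
  have hμst : μ (s ∩ t) ≠ ⊤ := measure_ne_top_of_subset inter_subset_left hμs
  have hμsdt : μ (s \ t) ≠ ⊤ := measure_ne_top_of_subset sdiff_subset hμs
  have h_inter : ∫ u in s ∩ t, f u ∂μ ≤ μ.real (s ∩ t) * c := by
    simpa using setIntegral_mono_on (hf.mono_set inter_subset_left)
      (integrableOn_const hμst) (hs.inter ht) hf_le
  have h_sdiff : ∫ u in s \ t, f u ∂μ ≤ μ.real (s \ t) := by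
    simpa using setIntegral_mono_on (hf.mono_set sdiff_subset)
      (integrableOn_const hμsdt) (hs.diff ht) fun u hu => hf_le_one u hu.1
  rw [← integral_inter_add_sdiff ht hf, ← measureReal_inter_add_sdiff ht hμs]
  linarith

end IntegralBound

theorem Real.rpow_sub_logb_one_div {b : ℝ} (hb : 0 < b) (hb₁ : b ≠ 1) {q : ℝ} (hq : 0 < q)
    (x : ℝ) : b ^ (x - logb b (1 / q)) = b ^ x * q := by
  rw [rpow_sub hb, rpow_logb hb hb₁ (one_div_pos.2 hq), one_div, div_inv_eq_mul]

theorem mul_one_sub_mul_lt_of_inv_lt {p C x : ℝ} (hp : 0 < p) (hx : 0 ≤ x)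
    (h : p⁻¹ < 1 - C * (x / (x + 1))) : x * (1 - p * (1 - C)) < p - 1 := by
  have hx₁ : 0 < x + 1 := by linarith
  rw [inv_lt_iff_one_lt_mul₀' hp] at h
  have := mul_lt_mul_of_pos_right h hx₁
  field_simp at this
  nlinarith

theorem continuous_Hf (ν : ℕ) (h : ℕ → ℂ) : Continuous (Hf ν h) := by
  unfold Hf
  fun_prop

theorem norm2_nonneg (ν : ℕ) (h : ℕ → ℂ) : 0 ≤ norm2 ν h :=
  sum_nonneg fun _ _ => sq_nonneg _

theorem Dset_subset_Icc (ν : ℕ) (h : ℕ → ℂ) : Dset ν h ⊆ Icc (-π) π :=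
  fun _ hu => hu.1

theorem measurableSet_Dset (ν : ℕ) (h : ℕ → ℂ) : MeasurableSet (Dset ν h) :=
  measurableSet_Icc.inter
    (measurableSet_lt measurable_const ((continuous_Hf ν h).norm.pow 2).measurable)

noncomputable def mmseMean (ν : ℕ) (snr : ℝ) (h : ℕ → ℂ) : ℝ :=
  (2 * π)⁻¹ * ∫ u in (-π)..π, (snr * ‖Hf ν h u‖ ^ 2 + 1)⁻¹

theorem one_add_γmmse_eq_inv_mmseMean (ν : ℕ) (snr : ℝ) (h : ℕ → ℂ) :
    1 + γmmse ν snr h = (mmseMean ν snr h)⁻¹ := by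
  rw [γmmse, mmseMean]
  ring

section MMSE

variable (ν : ℕ) (h : ℕ → ℂ) {snr : ℝ}

theorem mmse_denom_pos (hsnr : 0 ≤ snr) (u : ℝ) : 0 < snr * ‖Hf ν h u‖ ^ 2 + 1 := by
  positivity

theorem continuous_inv_mmse_denom (hsnr : 0 ≤ snr) :
    Continuous fun u => (snr * ‖Hf ν h u‖ ^ 2 + 1)⁻¹ :=
  (continuous_const.mul ((continuous_Hf ν h).norm.pow 2) |>.add continuous_const).inv₀
    fun u => (mmse_denom_pos ν h hsnr u).ne'

theorem mmseMean_pos (hsnr : 0 ≤ snr) : 0 < mmseMean ν snr h :=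
  mul_pos (by positivity) <| intervalIntegral.intervalIntegral_pos_of_pos_on
    ((continuous_inv_mmse_denom ν h hsnr).intervalIntegrable _ _)
    (fun u _ => inv_pos.2 (mmse_denom_pos ν h hsnr u)) (by linarith [pi_pos])

theorem mmseMean_le (hsnr : 0 ≤ snr) :
    mmseMean ν snr h ≤
      1 - volume.real (Dset ν h) / (2 * π) * (snr * norm2 ν h / (snr * norm2 ν h + 1)) := by
  set x := snr * norm2 ν h
  have hx : 0 ≤ x := mul_nonneg hsnr (norm2_nonneg ν h)
  have h_le_one : ∀ u ∈ Icc (-π) π, (snr * ‖Hf ν h u‖ ^ 2 + 1)⁻¹ ≤ 1 :=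
    fun u _ => inv_le_one_of_one_le₀ (le_add_of_nonneg_left (by positivity))
  have h_le_on_D : ∀ u ∈ Icc (-π) π ∩ Dset ν h, (snr * ‖Hf ν h u‖ ^ 2 + 1)⁻¹ ≤ (x + 1)⁻¹ :=
    fun u hu => inv_anti₀ (by positivity) (by simp only [x]; gcongr; exact hu.2.2.le)
  have h_int := setIntegral_le_measureReal_sub_mul (μ := volume) measurableSet_Icc
    measure_Icc_lt_top.ne (measurableSet_Dset ν h)
    (continuous_inv_mmse_denom ν h hsnr).integrableOn_Icc h_le_one h_le_on_D
  rw [inter_eq_right.2 (Dset_subset_Icc ν h), volume_real_Icc_of_le (by linarith [pi_pos]),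
    integral_Icc_eq_integral_Ioc, ← intervalIntegral.integral_of_le (by linarith [pi_pos])] at h_int
  have h_one_sub : 1 - (x + 1)⁻¹ = x / (x + 1) := by field_simp; ring
  have hπ : 0 < 2 * π := by positivity
  calc mmseMean ν snr h
      ≤ (2 * π)⁻¹ * (π - -π - x / (x + 1) * volume.real (Dset ν h)) := by
        rw [mmseMean, ← h_one_sub]; gcongr
    _ = _ := by field_simp; ring

end MMSE

theorem mmse_outage_implies_fade_general (C' : ℝ) (hC : C' ∈ Set.Ioo (0 : ℝ) 1)
    (Rmax : ℝ) (hRmax : Rmax = Real.logb 2 (1 / (1 - C')))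
    (R : ℝ) (hRlt : R < Rmax)
    (ν : ℕ) (h : ℕ → ℂ) (snr : ℝ) (hsnr : 0 < snr)
    (hD : 2 * Real.pi * C' ≤ (volume (Dset ν h)).toReal)
    (hout : 1 + γmmse ν snr h < 2 ^ R) :
    snr * norm2 ν h < (2 ^ R - 1) / (1 - 2 ^ (R - Rmax)) := by
  set x := snr * norm2 ν h
  have hC'_le : C' ≤ volume.real (Dset ν h) / (2 * π) := by
    rw [le_div_iff₀ (by positivity), mul_comm]; exact hD
  have hx : 0 ≤ x := mul_nonneg hsnr.le (norm2_nonneg ν h)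
  have h_mean_le : mmseMean ν snr h ≤ 1 - C' * (x / (x + 1)) := (mmseMean_le ν h hsnr.le).trans
    (sub_le_sub_left (mul_le_mul_of_nonneg_right hC'_le (div_nonneg hx (by linarith))) 1)
  have h_key := mul_one_sub_mul_lt_of_inv_lt (rpow_pos_of_pos two_pos R) hx
    ((inv_lt_of_inv_lt₀ (mmseMean_pos ν h hsnr.le) (one_add_γmmse_eq_inv_mmseMean ν snr h ▸ hout)).trans_le
      h_mean_le)
  have h_fade_pos : 0 < 1 - (2 : ℝ) ^ (R - Rmax) :=
    sub_pos.2 (rpow_lt_one_of_one_lt_of_neg one_lt_two (sub_neg.2 hRlt))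
  have h_fade : (2 : ℝ) ^ (R - Rmax) = 2 ^ R * (1 - C') := by
    rw [hRmax, rpow_sub_logb_one_div two_pos (by norm_num) (sub_pos.2 hC.2)]
  rw [lt_div_iff₀ h_fade_pos, h_fade]
  linarith

/-- Equations (16)–(18): with `C' ∈ (0,1)`, `R_max = log₂(1/(1-C'))` and `0 < R < R_max`,
every `h` with `|D(h)| ≥ 2π C'` that is in MMSE outage at spectral efficiency `R`
(`1 + γ_mmse(snr, h) < 2^R`) must satisfy `snr·‖h‖² < (2^R - 1)/(1 - 2^{R - R_max})`. -/
theorem mmse_outage_implies_fade (C' : ℝ) (hC : C' ∈ Set.Ioo (0 : ℝ) 1)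
    (Rmax : ℝ) (hRmax : Rmax = Real.logb 2 (1 / (1 - C')))
    (R : ℝ) (hR0 : 0 < R) (hRlt : R < Rmax)
    (ν : ℕ) (h : ℕ → ℂ) (snr : ℝ) (hsnr : 0 < snr)
    (hD : 2 * Real.pi * C' ≤ (volume (Dset ν h)).toReal)
    (hout : 1 + γmmse ν snr h < 2 ^ R) :
    snr * norm2 ν h < (2 ^ R - 1) / (1 - 2 ^ (R - Rmax)) :=
  mmse_outage_implies_fade_general C' hC Rmax hRmax R hRlt ν h snr hsnr hD hout
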